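/- (Real analyticity of the reparametrized Student-t mixture log-likelihood.) Fix d, K, n ≥ 1, ε > 0 and data points x_1,…,x_n ∈ ℝ^d. The function H(α, ν, μ, Σ) = −(1/n) Σ_{i=1}^n log( Σ_{k=1}^K φ1(α)_k · f( x_i | φ2(ν)_k, μ_k, φ3(Σ)_k ) ), with φ1(α)_k = exp(α_k)/Σ_{j=1}^K exp(α_j), φ2(ν)_k = ν_k² + ε and φ3(Σ)_k = Σ_kᵀΣ_k + εI, is real analytic on all of ℝ^K × ℝ^K × ℝ^{d×K} × Sym(d)^K. -/

import Mathlib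

/-!
Every ingredient of `H` is analytic on the region where it is used: `exp`, `log` and real
powers with positive base, `Γ` away from the poles (since `1/Γ` is entire), and determinants and
inverses of matrices with nonzero determinant. The reparametrization puts every parameter in that
region: `φ₂(ν) ≥ ε > 0` and `φ₃(Σ) = ΣᵀΣ + εI` is positive definite, so the Gamma arguments, the
determinant and the base `1 + (x - μ)ᵀ φ₃(Σ)⁻¹ (x - μ) / φ₂(ν)` are positive, each Student density
is positive, and so is the mixture density inside the logarithm.
-/

open Filter Topology Matrix

attribute [local instance] Matrix.normedAddCommGroup Matrix.normedSpace

/-- The density of the `d`-dimensional Student-t distribution with `ν` degrees of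
freedom, location `μ` and scatter matrix `Sig`, evaluated at `x`. -/
noncomputable def studentPdf (d : ℕ) (ν : ℝ) (μ : Fin d → ℝ)
    (Sig : Matrix (Fin d) (Fin d) ℝ) (x : Fin d → ℝ) : ℝ :=
  Real.Gamma (((d : ℝ) + ν) / 2) /
      (Real.Gamma (ν / 2) * ν ^ ((d : ℝ) / 2) * Real.pi ^ ((d : ℝ) / 2) *
        Real.sqrt Sig.det) *
    (1 + (1 / ν) * dotProduct (x - μ) (Sig⁻¹ *ᵥ (x - μ))) ^ (-(((d : ℝ) + ν) / 2))

/-- The reparametrized negative log-likelihood of a Student-t mixture model. -/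
noncomputable def mmH (d K n : ℕ) (ε : ℝ) (x : Fin n → Fin d → ℝ)
    (α ν : Fin K → ℝ) (μ : Fin K → Fin d → ℝ)
    (Sig : Fin K → Matrix (Fin d) (Fin d) ℝ) : ℝ :=
  -(1 / n : ℝ) * ∑ i, Real.log (∑ k,
    (Real.exp (α k) / ∑ j, Real.exp (α j)) *
      studentPdf d (ν k ^ 2 + ε) (μ k) ((Sig k)ᵀ * Sig k + ε • 1) (x i))

attribute [local fun_prop] analyticAt_fst analyticAt_snd

@[fun_prop]
theorem analyticAt_apply {𝕜 ι : Type*} [NontriviallyNormedField 𝕜] [Fintype ι] {F : ι → Type*}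
    [∀ i, NormedAddCommGroup (F i)] [∀ i, NormedSpace 𝕜 (F i)] (i : ι) (x : ∀ i, F i) :
    AnalyticAt 𝕜 (fun f : ∀ i, F i => f i) x :=
  (ContinuousLinearMap.proj (R := 𝕜) i).analyticAt x

theorem Complex.analyticAt_Gamma {s : ℂ} (hs : ∀ m : ℕ, s ≠ -m) :
    AnalyticAt ℂ Complex.Gamma s := by
  simpa only [inv_inv] using
    (differentiable_one_div_Gamma.analyticAt s).fun_inv (inv_ne_zero (Gamma_ne_zero hs))

theorem Real.analyticAt_Gamma {s : ℝ} (hs : ∀ m : ℕ, s ≠ -m) : AnalyticAt ℝ Real.Gamma s := by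
  have : Real.Gamma = fun t : ℝ => (Complex.Gamma t).re := by
    ext t
    rw [Complex.Gamma_ofReal, Complex.ofReal_re]
  rw [this]
  exact (Complex.analyticAt_Gamma fun m => by exact_mod_cast hs m).re_ofReal

section RealAnalytic

variable {E : Type*} [NormedAddCommGroup E] [NormedSpace ℝ E] {f g : E → ℝ} {x : E}

@[fun_prop]
theorem AnalyticAt.Gamma (hf : AnalyticAt ℝ f x) (h : 0 < f x) :
    AnalyticAt ℝ (fun z => Real.Gamma (f z)) x :=
  (Real.analyticAt_Gamma fun m => by linarith [(m.cast_nonneg : (0 : ℝ) ≤ m)]).comp hf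

@[fun_prop]
theorem AnalyticAt.rpow (hf : AnalyticAt ℝ f x) (hg : AnalyticAt ℝ g x) (h : 0 < f x) :
    AnalyticAt ℝ (fun z => f z ^ g z) x := by
  refine (((analyticAt_log h).comp hf).mul hg).rexp.congr ?_
  filter_upwards [hf.continuousAt.eventually (eventually_gt_nhds h)] with z hz
  simp only [Function.comp_apply, Pi.mul_apply, Real.rpow_def_of_pos hz]

@[fun_prop]
theorem AnalyticAt.sqrt (hf : AnalyticAt ℝ f x) (h : 0 < f x) :
    AnalyticAt ℝ (fun z => √(f z)) x := by
  simpa only [Real.sqrt_eq_rpow] using hf.rpow analyticAt_const h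

end RealAnalytic

section MatrixAnalytic

variable {𝕜 E m n : Type*} [NontriviallyNormedField 𝕜] [NormedAddCommGroup E] [NormedSpace 𝕜 E]
  [Fintype m] [Fintype n] {x : E}

theorem analyticAt_matrix {A : E → Matrix m n 𝕜} :
    AnalyticAt 𝕜 A x ↔ ∀ i j, AnalyticAt 𝕜 (fun e => A e i j) x :=
  analyticAt_pi_iff.trans <| forall_congr' fun _ => analyticAt_pi_iff

@[fun_prop]
theorem AnalyticAt.matrix_transpose {A : E → Matrix m n 𝕜} (hA : AnalyticAt 𝕜 A x) :
    AnalyticAt 𝕜 (fun e => (A e)ᵀ) x :=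
  analyticAt_matrix.2 fun i j => by simp only [transpose_apply]; fun_prop

@[fun_prop]
theorem AnalyticAt.matrix_mul {A : E → Matrix m n 𝕜} {B : E → Matrix n m 𝕜}
    (hA : AnalyticAt 𝕜 A x) (hB : AnalyticAt 𝕜 B x) : AnalyticAt 𝕜 (fun e => A e * B e) x :=
  analyticAt_matrix.2 fun i j => by simp only [mul_apply]; fun_prop

variable [DecidableEq n] {A : E → Matrix n n 𝕜}

@[fun_prop]
theorem AnalyticAt.matrix_det (hA : AnalyticAt 𝕜 A x) : AnalyticAt 𝕜 (fun e => (A e).det) x := by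
  simp only [det_apply']
  fun_prop

@[fun_prop]
theorem AnalyticAt.matrix_adjugate (hA : AnalyticAt 𝕜 A x) :
    AnalyticAt 𝕜 (fun e => (A e).adjugate) x := by
  refine analyticAt_matrix.2 fun i j => ?_
  simp only [adjugate_apply]
  refine AnalyticAt.matrix_det (analyticAt_matrix.2 fun a b => ?_)
  rcases eq_or_ne a j with rfl | hab
  · simpa only [updateRow_self] using analyticAt_const
  · simp only [updateRow_ne hab]
    fun_prop

theorem AnalyticAt.matrix_inv (hA : AnalyticAt 𝕜 A x) (hdet : (A x).det ≠ 0) :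
    AnalyticAt 𝕜 (fun e => (A e)⁻¹) x := by
  simp only [inv_def, Ring.inverse_eq_inv']
  exact (hA.matrix_det.inv hdet).smul hA.matrix_adjugate

end MatrixAnalytic

theorem Matrix.posDef_transpose_mul_self_add_smul_one {n : Type*} [Fintype n] [DecidableEq n]
    (A : Matrix n n ℝ) {ε : ℝ} (hε : 0 < ε) : (Aᵀ * A + ε • 1).PosDef := by
  simpa only [conjTranspose_eq_transpose_of_trivial] using
    PosDef.posSemidef_add (posSemidef_conjTranspose_mul_self A) (PosDef.one.smul hε)

section StudentPdf

variable {d : ℕ}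

theorem one_add_div_mul_quadForm_pos {ν : ℝ} {Sig : Matrix (Fin d) (Fin d) ℝ} (hν : 0 < ν)
    (hSig : Sig.PosDef) (v : Fin d → ℝ) : 0 < 1 + (1 / ν) * v ⬝ᵥ (Sig⁻¹ *ᵥ v) := by
  have hQ : 0 ≤ v ⬝ᵥ (Sig⁻¹ *ᵥ v) := by
    simpa only [star_trivial] using hSig.inv.posSemidef.dotProduct_mulVec_nonneg v
  positivity

theorem studentPdf_pos {ν : ℝ} {μ : Fin d → ℝ} {Sig : Matrix (Fin d) (Fin d) ℝ}
    (hν : 0 < ν) (hSig : Sig.PosDef) (y : Fin d → ℝ) : 0 < studentPdf d ν μ Sig y := by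
  have hdet := hSig.det_pos
  have hbase := one_add_div_mul_quadForm_pos hν hSig (y - μ)
  unfold studentPdf
  positivity

variable {E : Type*} [NormedAddCommGroup E] [NormedSpace ℝ E] {ν : E → ℝ}
  {μ : E → Fin d → ℝ} {Sig : E → Matrix (Fin d) (Fin d) ℝ} {z : E}

theorem AnalyticAt.studentPdf (hν : AnalyticAt ℝ ν z) (hμ : AnalyticAt ℝ μ z)
    (hSig : AnalyticAt ℝ Sig z) (hν₀ : 0 < ν z) (hSig₀ : (Sig z).PosDef) (y : Fin d → ℝ) :
    AnalyticAt ℝ (fun e => studentPdf d (ν e) (μ e) (Sig e) y) z := by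
  have hinv := hSig.matrix_inv hSig₀.det_pos.ne'
  have hQ : AnalyticAt ℝ (fun e => (y - μ e) ⬝ᵥ ((Sig e)⁻¹ *ᵥ (y - μ e))) z := by
    simp only [dotProduct, mulVec, Pi.sub_apply]
    fun_prop
  have hdet := hSig₀.det_pos
  have hbase := one_add_div_mul_quadForm_pos hν₀ hSig₀ (y - μ z)
  unfold _root_.studentPdf
  fun_prop (disch := first | assumption | positivity)

end StudentPdf

theorem mmH_real_analytic_general (d K n : ℕ) (hK : 1 ≤ K)
    (ε : ℝ) (hε : 0 < ε) (x : Fin n → Fin d → ℝ) :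
    AnalyticOnNhd ℝ
      (fun p : (Fin K → ℝ) × (Fin K → ℝ) × (Fin K → Fin d → ℝ) ×
          (Fin K → Matrix (Fin d) (Fin d) ℝ) =>
        mmH d K n ε x p.1 p.2.1 p.2.2.1 p.2.2.2)
      {p | ∀ k, (p.2.2.2 k).IsSymm} := by
  have : Nonempty (Fin K) := ⟨⟨0, hK⟩⟩
  rintro ⟨α, ν, μ, Sig⟩ -
  have hν k : 0 < ν k ^ 2 + ε := by positivity
  have hSig k := (Sig k).posDef_transpose_mul_self_add_smul_one hε
  have hZ : 0 < ∑ j, Real.exp (α j) :=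
    Finset.sum_pos (fun j _ => Real.exp_pos _) Finset.univ_nonempty
  have hmix i : 0 < ∑ k, Real.exp (α k) / (∑ j, Real.exp (α j)) *
      studentPdf d (ν k ^ 2 + ε) (μ k) ((Sig k)ᵀ * Sig k + ε • 1) (x i) :=
    Finset.sum_pos (fun k _ => mul_pos (by positivity) (studentPdf_pos (hν k) (hSig k) _))
      Finset.univ_nonempty
  unfold mmH
  refine analyticAt_const.mul (Finset.analyticAt_fun_sum _ fun i _ => ?_)
  refine (analyticAt_log (hmix i)).comp_of_eq (Finset.analyticAt_fun_sum _ fun k _ => ?_) rfl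
  refine AnalyticAt.mul (by fun_prop (disch := exact hZ.ne')) ?_
  apply AnalyticAt.studentPdf <;> first | fun_prop | exact hν k | exact hSig k

/-- the reparametrized Student-t mixture negative log-likelihood is real
analytic at every point of `ℝ^K × ℝ^K × ℝ^{d×K} × Sym(d)^K`. -/
theorem mmH_real_analytic (d K n : ℕ) (hd : 1 ≤ d) (hK : 1 ≤ K) (hn : 1 ≤ n)
    (ε : ℝ) (hε : 0 < ε) (x : Fin n → Fin d → ℝ) :
    AnalyticOnNhd ℝ
      (fun p : (Fin K → ℝ) × (Fin K → ℝ) × (Fin K → Fin d → ℝ) ×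
          (Fin K → Matrix (Fin d) (Fin d) ℝ) =>
        mmH d K n ε x p.1 p.2.1 p.2.2.1 p.2.2.2)
      {p | ∀ k, (p.2.2.2 k).IsSymm} :=
  mmH_real_analytic_general d K n hK ε hε x
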